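/- arXiv:1803.08193 — 4 statements merged into one kernel-verified Lean document; each statement's English description precedes it below -/
import Mathlib

section
/- Let X be a topological space and f, g : X → X functions. If f is an open map, then for every subset A ⊆ X, cl(f⁻¹(cl(g⁻¹(A)))) = cl(f⁻¹(g⁻¹(A))) = cl((g ∘ f)⁻¹(A)). (Sequencing lemma: the PDL sequencing axiom ⟨π₁;π₂⟩φ ↔ ⟨π₁⟩⟨π₂⟩φ is valid when f_{π₁} is open.) -/
theorem IsOpenMap.closure_preimage_closure {X Y : Type*} [TopologicalSpace X]
    [TopologicalSpace Y] {f : X → Y} (hf : IsOpenMap f) (s : Set Y) :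
    closure (f ⁻¹' closure s) = closure (f ⁻¹' s) :=
  (closure_minimal hf.preimage_closure_subset_closure_preimage isClosed_closure).antisymm
    (closure_mono (Set.preimage_mono subset_closure))

theorem stmt_2 {X : Type*} [TopologicalSpace X] (f g : X → X) (hf : IsOpenMap f)
    (A : Set X) :
    closure (f ⁻¹' closure (g ⁻¹' A)) = closure (f ⁻¹' (g ⁻¹' A)) ∧
    closure (f ⁻¹' (g ⁻¹' A)) = closure ((g ∘ f) ⁻¹' A) :=
  ⟨hf.closure_preimage_closure _, rfl⟩
end

section
/- Let (X, (R_π)_{π ∈ Π}) be a serial relational frame (each R_π is a serial relation on X) with valuation v. Define the set X̃ of networks α : Π* → X (maps from finite sequences over Π to X satisfying α(s) R_π α(s ++ [π]) for all sequences s and all π), topologize X̃ by the partition into sets U_x = {α : α(ε) = x}, and define f_π : X̃ → X̃ by f_π(α)(s) = α(π :: s). Then for every PDL formula φ and every network α, α satisfies φ in the dynamic topological model (with ⟨π⟩ interpreted as x ∈ cl(f_π⁻¹(⟦φ⟧))) if and only if α(ε) satisfies φ in the relational model (with the standard existential interpretation of ⟨π⟩). -/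
open TopologicalSpace

/-- PDL formulas over atoms `P` and program labels `Pr`. -/
inductive PDLForm (P Pr : Type*) where
  | atom : P → PDLForm P Pr
  | neg : PDLForm P Pr → PDLForm P Pr
  | and : PDLForm P Pr → PDLForm P Pr → PDLForm P Pr
  | dia : Pr → PDLForm P Pr → PDLForm P Pr

/-- Standard relational (PDL) semantics. -/
def relSat {P Pr X : Type*} (R : Pr → X → X → Prop) (v : P → Set X) :
    X → PDLForm P Pr → Prop
  | x, .atom p => x ∈ v p
  | x, .neg φ => ¬ relSat R v x φ
  | x, .and φ ψ => relSat R v x φ ∧ relSat R v x ψ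
  | x, .dia π φ => ∃ y, R π x y ∧ relSat R v y φ

/-- Topological semantics: `⟨π⟩φ` holds at `x` iff `x ∈ cl(f_π⁻¹⟦φ⟧)`. -/
def topSat {P Pr Y : Type*} (t : TopologicalSpace Y) (f : Pr → Y → Y) (v : P → Set Y) :
    PDLForm P Pr → Set Y
  | .atom p => v p
  | .neg φ => (topSat t f v φ)ᶜ
  | .and φ ψ => topSat t f v φ ∩ topSat t f v ψ
  | .dia π φ => @closure Y t (f π ⁻¹' topSat t f v φ)

/-- Networks through a relational frame. -/
def Network {Pr X : Type*} (R : Pr → X → X → Prop) : Type _ :=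
  {α : List Pr → X // ∀ (s : List Pr) (π : Pr), R π (α s) (α (s ++ [π]))}

/-- The partition topology on networks, generated by the sets `U_x = {α | α ε = x}`. -/
def netTop {Pr X : Type*} (R : Pr → X → X → Prop) : TopologicalSpace (Network R) :=
  generateFrom {U | ∃ x : X, U = {α : Network R | α.1 [] = x}}

/-- The dynamics on networks: `f_π(α)(s) = α(π :: s)`. -/
def netF {Pr X : Type*} (R : Pr → X → X → Prop) (π : Pr) (α : Network R) : Network R :=
  ⟨fun s => α.1 (π :: s), fun s π' => α.2 (π :: s) π'⟩

/-! The partition topology on networks is the topology induced by the root map `α ↦ α ε` from the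
discrete topology on `X`, so `α` lies in the closure of `S` iff some network in `S` has the root
of `α`. Hence `α ⊨ ⟨π⟩φ` iff some network with root `α ε` has a `π`-shift satisfying `φ`, i.e. a
`π`-child at its root satisfying `φ`. Conversely, every edge `x R_π y` is realised by a network:
seriality extends any point to a network, and grafting such networks below `x` gives one with the
prescribed `π`-child. -/

open Topology

namespace Network

variable {Pr X : Type*} {R : Pr → X → X → Prop}

theorem netTop_eq_induced : netTop R = .induced (fun α : Network R => α.1 []) ⊥ := by
  let _ : TopologicalSpace X := ⊥
  have : DiscreteTopology X := ⟨rfl⟩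
  refine le_antisymm ?_ (le_generateFrom ?_)
  · rw [← continuous_iff_le_induced]
    let _ := netTop R
    exact continuous_discrete_rng.2 fun x => isOpen_generateFrom_of_mem ⟨x, rfl⟩
  · rintro _ ⟨x, rfl⟩
    exact isOpen_induced (isOpen_discrete {x})

theorem mem_closure_netTop_iff {S : Set (Network R)} {α : Network R} :
    α ∈ closure[netTop R] S ↔ ∃ β ∈ S, β.1 [] = α.1 [] := by
  let _ : TopologicalSpace X := ⊥
  have : DiscreteTopology X := ⟨rfl⟩
  rw [netTop_eq_induced, closure_induced, closure_discrete, Set.mem_image]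

def cons (x : X) (β : Pr → Network R) (h : ∀ π, R π x ((β π).1 [])) : Network R :=
  ⟨fun | [] => x | π :: s => (β π).1 s, by rintro (_ | ⟨τ, s⟩) σ; exacts [h σ, (β τ).2 s σ]⟩

theorem exists_root (hser : ∀ (π : Pr) (x : X), ∃ y, R π x y) (x : X) :
    ∃ α : Network R, α.1 [] = x := by
  choose next hnext using hser
  refine ⟨⟨fun s => s.foldl (fun y π => next π y) x, fun s π => ?_⟩, rfl⟩
  dsimp only
  rw [List.foldl_append]
  exact hnext _ _

theorem exists_root_netF_root (hser : ∀ (π : Pr) (x : X), ∃ y, R π x y) {π : Pr} {x y : X}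
    (hxy : R π x y) : ∃ α : Network R, α.1 [] = x ∧ (netF R π α).1 [] = y := by
  have hchild (σ : Pr) : ∃ β : Network R, R σ x (β.1 []) ∧ (σ = π → β.1 [] = y) := by
    by_cases hσ : σ = π
    · subst hσ
      obtain ⟨β, rfl⟩ := exists_root hser y
      exact ⟨β, hxy, fun _ => rfl⟩
    · obtain ⟨z, hxz⟩ := hser σ x
      obtain ⟨β, rfl⟩ := exists_root hser z
      exact ⟨β, hxz, (absurd · hσ)⟩
  choose β hβ using hchild
  exact ⟨cons x β fun σ => (hβ σ).1, rfl, (hβ π).2 rfl⟩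

end Network

theorem stmt_10 {P Pr X : Type*} (R : Pr → X → X → Prop)
    (hser : ∀ (π : Pr) (x : X), ∃ y, R π x y) (v : P → Set X)
    (φ : PDLForm P Pr) (α : Network R) :
    α ∈ topSat (netTop R) (netF R) (fun p => {β : Network R | β.1 [] ∈ v p}) φ ↔
      relSat R v (α.1 []) φ := by
  induction φ generalizing α with
  | atom p => exact Iff.rfl
  | neg φ ih => exact not_congr (ih α)
  | and φ ψ ih₁ ih₂ => exact and_congr (ih₁ α) (ih₂ α)
  | dia π φ ih =>
    rw [topSat, relSat, Network.mem_closure_netTop_iff]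
    constructor
    · rintro ⟨β, hβ, hroot⟩
      exact ⟨(netF R π β).1 [], hroot ▸ β.2 [] π, (ih _).1 hβ⟩
    · rintro ⟨y, hxy, hy⟩
      obtain ⟨β, hroot, hβ⟩ := Network.exists_root_netF_root hser hxy
      exact ⟨β, (ih _).2 (hβ ▸ hy), hroot⟩
end

section
/- In the network model construction: let (X, (R_π)) be a serial relational frame, X̃ the set of networks through it with the partition topology generated by the sets U_x = {α : α(ε) = x}, and f_π(α)(s) = α(π :: s). Then each f_π is an open map; specifically, f_π(U_x) = ⋃_{y ∈ R_π(x)} U_y, which is open. -/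
open TopologicalSpace

/-!
A network is its root together with its subnetworks `f_π α`, one for each label `π`; conversely,
a root `x` and subnetworks whose roots are `R_π`-successors of `x` graft to a network, and
seriality supplies such subnetworks for every label. Hence `f_π` maps `U_x` onto the networks
whose root lies in `R_π(x)`, a union of basic sets; since the `U_x` form a basis, `f_π` is open.
-/

open Topology

theorem isTopologicalBasis_fibers {Y X : Type*} (f : Y → X) :
    @IsTopologicalBasis Y (generateFrom {U | ∃ x, U = {y | f y = x}})
      {U | ∃ x, U = {y | f y = x}} := by
  refine @IsTopologicalBasis.mk _ (generateFrom _) _ ?_ ?_ rfl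
  · rintro _ ⟨a, rfl⟩ _ ⟨b, rfl⟩ y ⟨rfl, rfl⟩
    exact ⟨_, ⟨f y, rfl⟩, rfl, fun z hz => ⟨hz, hz⟩⟩
  · exact Set.eq_univ_of_forall fun y => ⟨_, ⟨f y, rfl⟩, rfl⟩

namespace Network

variable {Pr X : Type*} {R : Pr → X → X → Prop}

noncomputable def ofSerial (hser : ∀ (π : Pr) (x : X), ∃ y, R π x y) (x : X) : Network R :=
  ⟨fun s => s.foldl (fun y π => (hser π y).choose) x,
    fun s π => by simpa using (hser π _).choose_spec⟩

lemma ofSerial_root (hser : ∀ (π : Pr) (x : X), ∃ y, R π x y) (x : X) :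
    (ofSerial hser x).1 [] = x :=
  rfl

def graft (x : X) (γ : Pr → Network R) (hγ : ∀ π, R π x ((γ π).1 [])) : Network R :=
  ⟨fun | [] => x | π :: s => (γ π).1 s, fun s π => by
    cases s with
    | nil => exact hγ π
    | cons a t => exact (γ a).2 t π⟩

lemma netF_graft (x : X) (γ : Pr → Network R) (hγ : ∀ π, R π x ((γ π).1 [])) (π : Pr) :
    netF R π (graft x γ hγ) = γ π :=
  rfl

lemma root_netF_rel (π : Pr) (α : Network R) : R π (α.1 []) ((netF R π α).1 []) :=
  α.2 [] π

lemma image_netF_fiber (hser : ∀ (π : Pr) (x : X), ∃ y, R π x y) (π : Pr) (x : X) :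
    netF R π '' {α : Network R | α.1 [] = x} = {α | R π x (α.1 [])} := by
  classical
  ext α
  constructor
  · rintro ⟨β, rfl, rfl⟩
    exact root_netF_rel π β
  · intro hα
    let γ := Function.update (fun π' => ofSerial hser (hser π' x).choose) π α
    have hγ : ∀ π', R π' x ((γ π').1 []) := by
      intro π'
      by_cases h : π' = π
      · subst h; simpa [γ] using hα
      · simpa [γ, h, ofSerial_root] using (hser π' x).choose_spec
    exact ⟨graft x γ hγ, rfl, by simp [netF_graft, γ]⟩

lemma setOf_root_mem_eq_biUnion (S : Set X) :
    {α : Network R | α.1 [] ∈ S} = ⋃ y ∈ S, {α : Network R | α.1 [] = y} := by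
  ext α
  simp

lemma isOpen_setOf_root_mem (S : Set X) :
    IsOpen[netTop R] {α : Network R | α.1 [] ∈ S} := by
  rw [setOf_root_mem_eq_biUnion]
  exact @isOpen_biUnion _ _ (netTop R) _ _ fun y _ => isOpen_generateFrom_of_mem ⟨y, rfl⟩

end Network

open Network in
theorem stmt_11 {Pr X : Type*} (R : Pr → X → X → Prop)
    (hser : ∀ (π : Pr) (x : X), ∃ y, R π x y) (π : Pr) :
    (@IsOpenMap (Network R) (Network R) (netTop R) (netTop R) (netF R π)) ∧
    ∀ x : X,
      netF R π '' {α : Network R | α.1 [] = x} =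
        ⋃ y ∈ {y : X | R π x y}, {α : Network R | α.1 [] = y} ∧
      @IsOpen (Network R) (netTop R) (netF R π '' {α : Network R | α.1 [] = x}) := by
  have isOpen_image_fiber : ∀ x : X, IsOpen[netTop R] (netF R π '' {α | α.1 [] = x}) :=
    fun x => image_netF_fiber hser π x ▸ isOpen_setOf_root_mem {y | R π x y}
  refine ⟨?_, fun x => ⟨?_, isOpen_image_fiber x⟩⟩
  · rw [@IsTopologicalBasis.isOpenMap_iff _ _ (netTop R) (netTop R) _
      (isTopologicalBasis_fibers fun α : Network R => α.1 [])]
    rintro _ ⟨x, rfl⟩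
    exact isOpen_image_fiber x
  · rw [image_netF_fiber hser, ← setOf_root_mem_eq_biUnion]
    rfl
end

section
/- If every relation R_π in a serial relational frame is serial, then in the associated network model every f_π is a total function, and moreover for every x ∈ X there exists at least one network α with α(ε) = x (i.e., each U_x is nonempty). -/
open TopologicalSpace

/-- A single successor function suffices in place of dependent choice: a network only relates each
word to its one-letter extensions, so `α s` can be computed by folding `s` from `x`. -/
def Network.ofSuccessor {Pr X : Type*} {R : Pr → X → X → Prop} (next : Pr → X → X)
    (hnext : ∀ π y, R π y (next π y)) (x : X) : Network R :=
  ⟨fun s => s.foldl (fun y π => next π y) x, fun s π => by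
    simpa only [List.foldl_append, List.foldl_cons, List.foldl_nil] using hnext π _⟩

theorem stmt_12 {Pr X : Type*} (R : Pr → X → X → Prop)
    (hser : ∀ (π : Pr) (x : X), ∃ y, R π x y) :
    (∀ (π : Pr) (α : Network R), ∃ β : Network R, netF R π α = β) ∧
    ∀ x : X, ∃ α : Network R, α.1 [] = x := by
  choose next hnext using hser
  exact ⟨fun π α => ⟨netF R π α, rfl⟩, fun x => ⟨Network.ofSuccessor next hnext x, rfl⟩⟩
end
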